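/- arXiv:1401.6659 — 2 statements merged into one kernel-verified Lean document; each statement's English description precedes it below -/
import Mathlib

section
/- Let S be a set of positive integers with positive Banach density δ(S) > 0. Then there exist a positive integer k with k < 2/δ(S) and a subset Q ⊆ S such that: (a) the Banach density of Q satisfies δ(Q) ≥ δ(S)³/24; and (b) for all a ∈ Q, we have a + k ∈ S. -/
/-- The Banach (upper) density of a set of natural numbers: the `limsup`, as the interval
length `n` tends to infinity, of the largest proportion `|S ∩ I| / |I|` over
intervals `I` of natural numbers of length `n`. -/
noncomputable def banachDensity (S : Set ℕ) : ℝ :=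
  Filter.limsup (fun n : ℕ => ⨆ a : ℕ, ((S ∩ Set.Ico a (a + n)).ncard : ℝ) / n) Filter.atTop

/-!
Let `K` be the largest integer below `2 / δ`, where `δ = δ(S)`, and `Q_k = S ∩ (S - k)`. In a window
`I` of length `n`, a point of `S ∩ I` lying in no `Q_k` with `1 ≤ k ≤ K` has no other point of `S`
among its next `K` successors, so such points form a `(K + 1)`-separated set, with at most
`n / (K + 1) + 1 ≤ δ n / 2 + 1` elements. In windows where `S` has density close to `δ`, the sets
`Q_k ∩ I` therefore cover about `δ n / 2` points, and one of these `K < 2 / δ` sets has at least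
`δ² n / 16` of them. As there are finitely many `k`, a single `k` does so for infinitely many window
lengths, whence `δ(Q_k) ≥ δ² / 16 ≥ δ³ / 24`.
-/

open Filter Set

noncomputable def maxWindowDensity (S : Set ℕ) (n : ℕ) : ℝ :=
  ⨆ a : ℕ, ((S ∩ Ico a (a + n)).ncard : ℝ) / n

def shiftInter (S : Set ℕ) (k : ℕ) : Set ℕ :=
  S ∩ (· + k) ⁻¹' S

lemma banachDensity_eq_limsup (S : Set ℕ) :
    banachDensity S = limsup (maxWindowDensity S) atTop :=
  rfl

section Density

variable (S : Set ℕ)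

lemma ncard_inter_Ico_le (a n : ℕ) : (S ∩ Ico a (a + n)).ncard ≤ n :=
  calc (S ∩ Ico a (a + n)).ncard ≤ (Ico a (a + n)).ncard :=
        ncard_le_ncard inter_subset_right (finite_Ico _ _)
    _ = n := by simp

lemma bddAbove_window_ratio (n : ℕ) :
    BddAbove (range fun a : ℕ => ((S ∩ Ico a (a + n)).ncard : ℝ) / n) := by
  refine ⟨1, ?_⟩
  rintro _ ⟨a, rfl⟩
  exact div_le_one_of_le₀ (by exact_mod_cast ncard_inter_Ico_le S a n) n.cast_nonneg

lemma le_maxWindowDensity (n a : ℕ) :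
    ((S ∩ Ico a (a + n)).ncard : ℝ) / n ≤ maxWindowDensity S n :=
  le_ciSup (bddAbove_window_ratio S n) a

lemma maxWindowDensity_nonneg (n : ℕ) : 0 ≤ maxWindowDensity S n :=
  (by positivity : (0 : ℝ) ≤ _).trans (le_maxWindowDensity S n 0)

lemma maxWindowDensity_le_one (n : ℕ) : maxWindowDensity S n ≤ 1 :=
  ciSup_le fun a => div_le_one_of_le₀ (by exact_mod_cast ncard_inter_Ico_le S a n) n.cast_nonneg

lemma banachDensity_le_one : banachDensity S ≤ 1 := by
  rw [banachDensity_eq_limsup]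
  exact limsup_le_of_le (isCoboundedUnder_le_of_le atTop (maxWindowDensity_nonneg S))
    (Eventually.of_forall (maxWindowDensity_le_one S))

variable {S}

lemma le_banachDensity_of_frequently {c : ℝ} (h : ∃ᶠ n in atTop, c ≤ maxWindowDensity S n) :
    c ≤ banachDensity S := by
  rw [banachDensity_eq_limsup]
  exact le_limsup_of_frequently_le h (isBoundedUnder_of ⟨1, maxWindowDensity_le_one S⟩)

lemma frequently_lt_maxWindowDensity {c : ℝ} (h : c < banachDensity S) :
    ∃ᶠ n in atTop, c < maxWindowDensity S n := by
  rw [banachDensity_eq_limsup] at h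
  exact frequently_lt_of_lt_limsup (isCoboundedUnder_le_of_le atTop (maxWindowDensity_nonneg S)) h

end Density

lemma ncard_le_div_add_one_of_separated {B : Set ℕ} {a n d : ℕ} (hd : 0 < d)
    (hB : B ⊆ Ico a (a + n)) (hsep : ∀ x ∈ B, ∀ y ∈ B, x < y → x + d ≤ y) :
    B.ncard ≤ n / d + 1 := by
  have hmono : StrictMonoOn (fun x => (x - a) / d) B := by
    intro x hx y hy hxy
    have hax : a ≤ x := (hB hx).1
    calc (x - a) / d < (x - a) / d + 1 := Nat.lt_succ_self _
      _ = (x - a + d) / d := (Nat.add_div_right _ hd).symm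
      _ ≤ (y - a) / d := Nat.div_le_div_right (by have := hsep x hx y hy hxy; omega)
  calc B.ncard ≤ (Iic (n / d)).ncard :=
        ncard_le_ncard_of_injOn _ (fun x hx => Nat.div_le_div_right (by have := (hB hx).2; omega))
          hmono.injOn (finite_Iic _)
    _ = n / d + 1 := by simp

lemma ncard_inter_Ico_le_sum_shiftInter (S : Set ℕ) (a n K : ℕ) :
    (S ∩ Ico a (a + n)).ncard ≤
      n / (K + 1) + 1 + ∑ k ∈ Finset.Icc 1 K, (shiftInter S k ∩ Ico a (a + n)).ncard := by
  set T := S ∩ Ico a (a + n)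
  set U := ⋃ k ∈ Finset.Icc 1 K, shiftInter S k
  have hT : T.Finite := (finite_Ico _ _).subset inter_subset_right
  -- a point of `T \ U` has no point of `S` among its next `K` successors
  have hsep : (T \ U).ncard ≤ n / (K + 1) + 1 := by
    refine ncard_le_div_add_one_of_separated K.succ_pos (sdiff_subset.trans inter_subset_right) ?_
    intro x hx y hy hxy
    by_contra hxy'
    refine hx.2 (mem_biUnion (x := y - x) (Finset.mem_Icc.mpr ⟨by omega, by omega⟩) ⟨hx.1.1, ?_⟩)
    simpa [Nat.add_sub_cancel' hxy.le] using hy.1.1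
  have hcover : (T ∩ U).ncard ≤ ∑ k ∈ Finset.Icc 1 K, (shiftInter S k ∩ Ico a (a + n)).ncard :=
    calc (T ∩ U).ncard ≤ (U ∩ Ico a (a + n)).ncard :=
          ncard_le_ncard (fun x hx => ⟨hx.2, hx.1.2⟩) ((finite_Ico _ _).subset inter_subset_right)
      _ ≤ _ := by rw [iUnion₂_inter]; exact Finset.set_ncard_biUnion_le _ _
  rw [← ncard_inter_add_ncard_sdiff_eq_ncard T U hT]
  omega

lemma exists_shiftInter_ncard_ge (S : Set ℕ) (a n : ℕ) {K : ℕ} (hK : 1 ≤ K) :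
    ∃ k ∈ Finset.Icc 1 K, (S ∩ Ico a (a + n)).ncard ≤
      n / (K + 1) + 1 + K * (shiftInter S k ∩ Ico a (a + n)).ncard := by
  have hsum := ncard_inter_Ico_le_sum_shiftInter S a n K
  obtain ⟨k, hk, hle⟩ := Finset.exists_le_of_sum_le (s := Finset.Icc 1 K)
    (f := fun _ => (S ∩ Ico a (a + n)).ncard - (n / (K + 1) + 1))
    (g := fun k => K * (shiftInter S k ∩ Ico a (a + n)).ncard) ⟨1, by simp [hK]⟩ (by
      rw [Finset.sum_const, Nat.card_Icc, smul_eq_mul, ← Finset.mul_sum, Nat.add_sub_cancel]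
      exact Nat.mul_le_mul_left _ (by omega))
  exact ⟨k, hk, by omega⟩

lemma frequently_exists_shiftInter_dense (S : Set ℕ) {K : ℕ} (hK : 1 ≤ K)
    (hδ : 0 < banachDensity S) (hK_lt : K * banachDensity S < 2)
    (hK_ge : 2 ≤ (K + 1) * banachDensity S) :
    ∃ᶠ n in atTop, ∃ k ∈ Finset.Icc 1 K,
      banachDensity S ^ 2 / 16 ≤ maxWindowDensity (shiftInter S k) n := by
  set δ := banachDensity S
  refine ((frequently_lt_maxWindowDensity (S := S) (c := 3 * δ / 4) (by linarith)).and_eventually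
    (eventually_ge_atTop ⌈8 / δ⌉₊)).mono ?_
  rintro n ⟨hn_dense, hn_large⟩
  obtain ⟨a, ha⟩ := exists_lt_of_lt_ciSup hn_dense
  obtain ⟨k, hk, hcount⟩ := exists_shiftInter_ncard_ge S a n hK
  refine ⟨k, hk, le_trans ?_ (le_maxWindowDensity _ n a)⟩
  set m := (S ∩ Ico a (a + n)).ncard
  set c := (shiftInter S k ∩ Ico a (a + n)).ncard
  have hn : 8 ≤ n * δ := (div_le_iff₀ hδ).mp (Nat.ceil_le.mp hn_large)
  have hn_pos : (0 : ℝ) < n := by nlinarith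
  have hm : 3 * δ / 4 * n < m := (lt_div_iff₀ hn_pos).mp ha
  have hblocks : ((n / (K + 1) : ℕ) : ℝ) ≤ n * δ / 2 := by
    refine Nat.cast_div_le.trans ?_
    rw [div_le_iff₀ (by positivity)]
    push_cast
    nlinarith
  have hcount' : (m : ℝ) ≤ ((n / (K + 1) : ℕ) : ℝ) + 1 + K * c := by exact_mod_cast hcount
  -- `K c ≥ m - δ n / 2 - 1 > δ n / 4 - 1 ≥ δ n / 8`
  have hKc : n * δ / 8 ≤ K * c := by linarith
  rw [le_div_iff₀ hn_pos]
  nlinarith [mul_le_mul_of_nonneg_left hKc hδ.le,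
    mul_le_mul_of_nonneg_right hK_lt.le (Nat.cast_nonneg c : (0 : ℝ) ≤ c)]

lemma exists_nat_lt_le_add_one {α : Type*} [Field α] [LinearOrder α] [IsStrictOrderedRing α]
    [FloorSemiring α] {x : α} (hx : 0 < x) : ∃ K : ℕ, (K : α) < x ∧ x ≤ K + 1 := by
  have hceil : 1 ≤ ⌈x⌉₊ := Nat.one_le_iff_ne_zero.mpr (Nat.ceil_pos.mpr hx).ne'
  refine ⟨⌈x⌉₊ - 1, ?_, ?_⟩ <;> push_cast [Nat.cast_sub hceil]
  · linarith [Nat.ceil_lt_add_one hx.le]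
  · linarith [Nat.le_ceil x]

theorem stmt_2_general (S : Set ℕ) (hδ : 0 < banachDensity S) :
    ∃ (k : ℕ) (Q : Set ℕ), 0 < k ∧ (k : ℝ) < 2 / banachDensity S ∧ Q ⊆ S ∧
      banachDensity Q ≥ banachDensity S ^ 3 / 24 ∧
      ∀ a ∈ Q, a + k ∈ S := by
  set δ := banachDensity S
  have hδ_le : δ ≤ 1 := banachDensity_le_one S
  obtain ⟨K, hK_lt, hK_ge⟩ := exists_nat_lt_le_add_one (div_pos two_pos hδ)
  have hK : 1 ≤ K := by
    have : (2 : ℝ) ≤ K + 1 := le_trans ((le_div_iff₀ hδ).mpr (by linarith)) hK_ge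
    exact_mod_cast (by linarith : (1 : ℝ) ≤ K)
  obtain ⟨k, hk, hk_dense⟩ := (Finset.frequently_exists _).mp
    (frequently_exists_shiftInter_dense S hK hδ ((lt_div_iff₀ hδ).mp hK_lt)
      ((div_le_iff₀ hδ).mp hK_ge))
  rw [Finset.mem_Icc] at hk
  refine ⟨k, shiftInter S k, hk.1, ?_, inter_subset_left, ?_, fun a ha => ha.2⟩
  · exact lt_of_le_of_lt (by exact_mod_cast hk.2) hK_lt
  · calc δ ^ 3 / 24 ≤ δ ^ 2 / 16 := by nlinarith [pow_pos hδ 2]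
      _ ≤ _ := le_banachDensity_of_frequently hk_dense

theorem stmt_2 (S : Set ℕ) (hpos : ∀ n ∈ S, 0 < n) (hδ : 0 < banachDensity S) :
    ∃ (k : ℕ) (Q : Set ℕ), 0 < k ∧ (k : ℝ) < 2 / banachDensity S ∧ Q ⊆ S ∧
      banachDensity Q ≥ banachDensity S ^ 3 / 24 ∧
      ∀ a ∈ Q, a + k ∈ S :=
  stmt_2_general S hδ
end

section
/- Let X be a Noetherian topological space, let f : X → X be a continuous map, let x ∈ X, let (x₋ₙ)_{n ≥ 0} be a coherent backward orbit of x with respect to f, and let Y ⊆ X be a closed subset. If the set S = { n ∈ ℕ : x₋ₙ ∈ Y } has positive Banach density, then S contains an infinite arithmetic progression. -/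
/-!
Since closed subsets of a Noetherian space satisfy the descending chain condition, there is a
minimal closed `Z ⊆ Y` whose return set `M = {n | o n ∈ Z}` still has positive Banach density.
A density-positive set always has positive-density self-intersections: for some `d > 0` the
set `{t ∈ M | t + d ∈ M}` has positive density (among more than `1 / δ(M)` translates of `M`,
two must overlap with positive density). Shifting by `d`, the returns to the closed set
`Z ∩ f^[d] ⁻¹' Z` have positive density, so by minimality `Z ⊆ f^[d] ⁻¹' Z`; along the backward
orbit this says `m + d ∈ M → m ∈ M`. Since `M` is infinite, it meets some residue class modulo
`d` infinitely often, and downward closure then puts that whole residue class into `M`.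
-/

open Filter Set

noncomputable def windowCount (S : Set ℕ) (a n : ℕ) : ℕ := (S ∩ Ico a (a + n)).ncard

noncomputable def windowDensity (S : Set ℕ) (n : ℕ) : ℝ := ⨆ a, (windowCount S a n : ℝ) / n

theorem banachDensity_eq_limsup_windowDensity (S : Set ℕ) :
    banachDensity S = limsup (windowDensity S) atTop := rfl

theorem windowCount_le (S : Set ℕ) (a n : ℕ) : windowCount S a n ≤ n := by
  unfold windowCount
  simpa using ncard_le_ncard (inter_subset_right (s := S)) (finite_Ico a (a + n))

theorem windowCount_le_ncard {S : Set ℕ} (hS : S.Finite) (a n : ℕ) : windowCount S a n ≤ S.ncard :=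
  ncard_le_ncard inter_subset_left hS

theorem windowCount_le_of_add_mem {A B : Set ℕ} {d : ℕ} (h : ∀ t ∈ A, t + d ∈ B) (a n : ℕ) :
    windowCount A a n ≤ windowCount B (a + d) n := by
  refine ncard_le_ncard_of_injOn (· + d) (fun t ⟨ht, ht'⟩ => ⟨h t ht, ?_⟩)
    (add_left_injective d).injOn ((finite_Ico _ _).inter_of_right _)
  simp only [mem_Ico] at ht' ⊢
  omega

open scoped Classical in
theorem windowCount_eq_card_filter (S : Set ℕ) (a n : ℕ) :
    windowCount S a n = ((Finset.Ico a (a + n)).filter (· ∈ S)).card := by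
  rw [windowCount, ← ncard_coe_finset, Finset.coe_filter]
  congr 1
  ext m
  simp [and_comm]

theorem windowCount_div_le_one (S : Set ℕ) (a n : ℕ) : (windowCount S a n : ℝ) / n ≤ 1 :=
  div_le_one_of_le₀ (by exact_mod_cast windowCount_le S a n) n.cast_nonneg

theorem bddAbove_range_windowCount_div (S : Set ℕ) (n : ℕ) :
    BddAbove (range fun a => (windowCount S a n : ℝ) / n) :=
  ⟨1, forall_mem_range.2 (windowCount_div_le_one S · n)⟩

theorem windowCount_div_le_windowDensity (S : Set ℕ) (a n : ℕ) :
    (windowCount S a n : ℝ) / n ≤ windowDensity S n :=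
  le_ciSup (bddAbove_range_windowCount_div S n) a

theorem windowDensity_nonneg (S : Set ℕ) (n : ℕ) : 0 ≤ windowDensity S n :=
  (div_nonneg (Nat.cast_nonneg _) n.cast_nonneg).trans (windowCount_div_le_windowDensity S 0 n)

theorem windowDensity_le_one (S : Set ℕ) (n : ℕ) : windowDensity S n ≤ 1 :=
  ciSup_le (windowCount_div_le_one S · n)

theorem isBoundedUnder_le_windowDensity (S : Set ℕ) :
    IsBoundedUnder (· ≤ ·) atTop (windowDensity S) :=
  isBoundedUnder_of ⟨1, windowDensity_le_one S⟩

theorem isCoboundedUnder_le_windowDensity (S : Set ℕ) :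
    IsCoboundedUnder (· ≤ ·) atTop (windowDensity S) :=
  (isBoundedUnder_of ⟨0, windowDensity_nonneg S⟩).isCoboundedUnder_le

theorem banachDensity_le_of_add_mem {A B : Set ℕ} {d : ℕ} (h : ∀ t ∈ A, t + d ∈ B) :
    banachDensity A ≤ banachDensity B :=
  limsup_le_limsup (Eventually.of_forall fun n => ciSup_le fun a =>
      (div_le_div_of_nonneg_right (by exact_mod_cast windowCount_le_of_add_mem h a n)
        n.cast_nonneg).trans (windowCount_div_le_windowDensity B _ n))
    (isCoboundedUnder_le_windowDensity A) (isBoundedUnder_le_windowDensity B)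

theorem Set.Finite.banachDensity_eq_zero {S : Set ℕ} (hS : S.Finite) : banachDensity S = 0 := by
  have hle : ∀ n, windowDensity S n ≤ S.ncard / n := fun n => ciSup_le fun a =>
    div_le_div_of_nonneg_right (by exact_mod_cast windowCount_le_ncard hS a n) n.cast_nonneg
  exact (tendsto_of_tendsto_of_tendsto_of_le_of_le tendsto_const_nhds
    (tendsto_const_div_atTop_nhds_zero_nat _) (windowDensity_nonneg S) hle).limsup_eq

theorem Set.infinite_of_banachDensity_pos {S : Set ℕ} (h : 0 < banachDensity S) : S.Infinite :=
  fun hS => h.ne' hS.banachDensity_eq_zero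

theorem Finset.card_filter_le_one_add_card_pairs {α : Type*} [LinearOrder α] (s : Finset α)
    (p : α → Prop) [DecidablePred p] :
    (s.filter p).card ≤ 1 + ((s ×ˢ s).filter fun q => q.1 < q.2 ∧ p q.1 ∧ p q.2).card := by
  set F := s.filter p
  rcases F.eq_empty_or_nonempty with hF | hF
  · simp [hF]
  have hmin := F.min'_mem hF
  rw [← Finset.card_erase_add_one hmin, add_comm]
  refine Nat.add_le_add_left (Finset.card_le_card_of_injOn (fun i => (F.min' hF, i)) ?_
    fun i _ j _ h => congrArg Prod.snd h) 1
  intro i hi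
  have hlt := F.min'_lt_of_mem_erase_min' hF hi
  simp only [F, Finset.mem_coe, Finset.mem_erase, Finset.mem_filter] at hmin hi
  simp only [Finset.mem_coe, Finset.mem_filter, Finset.mem_product]
  exact ⟨⟨hmin.1, hi.2.1⟩, hlt, hmin.2, hi.2.2⟩

theorem mul_windowCount_le {A : Set ℕ} {k n C : ℕ}
    (hC : ∀ e, 0 < e → e < k → ∀ b, windowCount {t | t ∈ A ∧ t + e ∈ A} b (n + k) ≤ C)
    (a : ℕ) : k * windowCount A a n ≤ n + k + k ^ 2 * C := by
  classical
  set W := Finset.Ico a (a + (n + k))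
  set K := Finset.range k
  -- `hit i m` says `m ∈ A + i`; the guard `i ≤ m` keeps truncated subtraction honest.
  let hit : ℕ → ℕ → Prop := fun i m => i ≤ m ∧ m - i ∈ A
  have hlow : ∀ i ∈ K, windowCount A a n ≤ (W.filter (hit i)).card := by
    intro i hi
    rw [windowCount_eq_card_filter]
    refine Finset.card_le_card_of_injOn (· + i) (fun t ht => ?_) (add_left_injective i).injOn
    simp only [K, W, hit, Finset.mem_coe, Finset.mem_filter, Finset.mem_Ico, Finset.mem_range,
      Nat.add_sub_cancel] at hi ht ⊢
    exact ⟨⟨by omega, by omega⟩, by omega, ht.2⟩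
  have hpair : ∀ q ∈ K ×ˢ K,
      (W.filter fun m => q.1 < q.2 ∧ hit q.1 m ∧ hit q.2 m).card ≤ C := by
    rintro ⟨i, j⟩ hq
    simp only [K, Finset.mem_product, Finset.mem_range] at hq
    by_cases hij : i < j
    swap
    · simp [hij]
    refine le_trans ?_ (hC (j - i) (by omega) (by omega) (a - j))
    rw [windowCount_eq_card_filter]
    refine Finset.card_le_card_of_injOn (· - j) (fun m hm => ?_) (fun m hm m' hm' h => ?_)
    · simp only [W, hit, Finset.mem_coe, Finset.mem_filter, Finset.mem_Ico,
        Set.mem_ofPred_eq] at hm ⊢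
      obtain ⟨⟨ham, hm⟩, -, ⟨-, hiA⟩, ⟨hjm, hjA⟩⟩ := hm
      refine ⟨⟨by omega, by omega⟩, hjA, ?_⟩
      rwa [show m - j + (j - i) = m - i by omega]
    · simp only [hit, Finset.mem_coe, Finset.mem_filter] at hm hm'
      simp only at h
      omega
  -- Double counting over the window `W`: a point hit by `c` translates `A + i` costs at most
  -- `1 + #{i < j both hitting it}`, and each pair `i < j` is a return of `A` to itself at lag
  -- `j - i`, counted by `hC`.
  calc k * windowCount A a n = ∑ _i ∈ K, windowCount A a n := by simp [K]
    _ ≤ ∑ i ∈ K, (W.filter (hit i)).card := Finset.sum_le_sum hlow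
    _ = ∑ m ∈ W, (K.filter (hit · m)).card := by
      simp only [Finset.card_filter]
      exact Finset.sum_comm
    _ ≤ ∑ m ∈ W, (1 + ((K ×ˢ K).filter fun q => q.1 < q.2 ∧ hit q.1 m ∧ hit q.2 m).card) :=
      Finset.sum_le_sum fun m _ => K.card_filter_le_one_add_card_pairs (hit · m)
    _ = n + k + ∑ q ∈ K ×ˢ K, (W.filter fun m => q.1 < q.2 ∧ hit q.1 m ∧ hit q.2 m).card := by
      simp only [Finset.sum_add_distrib, Finset.card_filter]
      rw [Finset.sum_comm]
      simp [W]
    _ ≤ n + k + k ^ 2 * C := by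
      grw [Finset.sum_le_card_nsmul _ _ C hpair]
      simp [K, sq]

theorem exists_pos_banachDensity_add_mem {A : Set ℕ} (hA : 0 < banachDensity A) :
    ∃ d, 0 < d ∧ 0 < banachDensity {t | t ∈ A ∧ t + d ∈ A} := by
  by_contra! h
  set γ := banachDensity A / 2 with hγ
  have hγ0 : 0 < γ := by positivity
  obtain ⟨k, hk⟩ := exists_nat_gt (4 / γ)
  have hk0 : (0 : ℝ) < k := (div_pos four_pos hγ0).trans hk
  have hk1 : 0 < k := by exact_mod_cast hk0
  -- `k γ > 4` and `k ^ 2 ε = 1 / 2` make `mul_windowCount_le` read `4 n < 3 n`.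
  set ε : ℝ := 1 / (2 * k ^ 2) with hε
  have hsmall : ∀ᶠ L in atTop, ∀ e ∈ Finset.Ioo 0 k,
      windowDensity {t | t ∈ A ∧ t + e ∈ A} L < ε :=
    (Finset.eventually_all _).2 fun e he => eventually_lt_of_limsup_lt
      ((h e (Finset.mem_Ioo.1 he).1).trans_lt (by positivity))
      (isBoundedUnder_le_windowDensity _)
  have hlarge : ∃ᶠ n in atTop, γ < windowDensity A n :=
    frequently_lt_of_lt_limsup (isCoboundedUnder_le_windowDensity A)
      (by rw [← banachDensity_eq_limsup_windowDensity]; linarith)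
  obtain ⟨n, hγn, hsmall_n, hkn⟩ := (hlarge.and_eventually
    (((tendsto_add_atTop_nat k).eventually hsmall).and (eventually_ge_atTop k))).exists
  obtain ⟨a, ha⟩ := exists_lt_of_lt_ciSup hγn
  have hn0 : (0 : ℝ) < n := hk0.trans_le (by exact_mod_cast hkn)
  have hC : ∀ e, 0 < e → e < k → ∀ b,
      windowCount {t | t ∈ A ∧ t + e ∈ A} b (n + k) ≤ ⌊ε * (n + k : ℕ)⌋₊ := by
    intro e he hek b
    refine Nat.le_floor ?_
    have := (windowCount_div_le_windowDensity _ b (n + k)).trans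
      (hsmall_n e (Finset.mem_Ioo.2 ⟨he, hek⟩)).le
    rwa [div_le_iff₀ (Nat.cast_pos.2 (by omega))] at this
  have hcount : (k * windowCount A a n : ℝ) ≤ n + k + k ^ 2 * (ε * (n + k : ℕ)) := by
    have := Nat.floor_le (a := ε * (n + k : ℕ)) (by positivity)
    calc (k * windowCount A a n : ℝ) ≤ (n + k + k ^ 2 * ⌊ε * (n + k : ℕ)⌋₊ : ℕ) := by
          exact_mod_cast mul_windowCount_le hC a
      _ ≤ _ := by push_cast at this ⊢; gcongr
  rw [lt_div_iff₀ hn0] at ha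
  have hkγ : 4 < k * γ := by rwa [div_lt_iff₀ hγ0] at hk
  have hk2ε : k ^ 2 * ε = 1 / 2 := by rw [hε]; field_simp
  have hkn' : (k : ℝ) ≤ n := by exact_mod_cast hkn
  push_cast at hcount
  have : (4 * n : ℝ) < 3 * n := calc
    (4 * n : ℝ) < k * γ * n := by gcongr
    _ < k * windowCount A a n := by rw [mul_assoc]; gcongr
    _ ≤ n + k + k ^ 2 * (ε * (n + k)) := hcount
    _ = 3 / 2 * (n + k) := by rw [← mul_assoc, hk2ε]; ring
    _ ≤ 3 * n := by linarith
  linarith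

theorem exists_forall_add_mul_mem {M : Set ℕ} (hM : M.Infinite) {d : ℕ} (hd : 0 < d)
    (hsub : ∀ m, m + d ∈ M → m ∈ M) : ∃ a, ∀ n, a + n * d ∈ M := by
  have hsub_mul : ∀ j m, m + j * d ∈ M → m ∈ M := by
    intro j
    induction j with
    | zero => simp
    | succ j ih => exact fun m h => ih m (hsub _ (by rwa [add_mul, one_mul, ← add_assoc] at h))
  have hres : ∃ᶠ m in atTop, ∃ r : Fin d, m ∈ M ∧ m % d = r :=
    (Nat.frequently_atTop_iff_infinite.mpr hM).mono fun m hm => ⟨⟨m % d, m.mod_lt hd⟩, hm, rfl⟩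
  obtain ⟨r, hr⟩ := frequently_exists.mp hres
  refine ⟨r, fun n => ?_⟩
  obtain ⟨b, ⟨hbM, hbr⟩, hb⟩ := (hr.and_eventually (eventually_gt_atTop (r + n * d))).exists
  have hq : n ≤ b / d := (Nat.le_div_iff_mul_le hd).mpr (by omega)
  refine hsub_mul (b / d - n) _ ?_
  have := Nat.div_add_mod b d
  have := Nat.mul_le_mul_right d hq
  rw [Nat.sub_mul, mul_comm d] at *
  convert hbM using 1
  omega

theorem iterate_apply_add_of_backward_orbit {X : Type*} {f : X → X} {o : ℕ → X}
    (ho : ∀ n, f (o (n + 1)) = o n) (d m : ℕ) : f^[d] (o (m + d)) = o m := by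
  induction d generalizing m with
  | zero => rfl
  | succ d ih => rw [Function.iterate_succ_apply, ← add_assoc, ho, ih]

theorem exists_subset_pos_banachDensity_of_add_mem_imp_mem {X : Type*} [TopologicalSpace X]
    [TopologicalSpace.NoetherianSpace X] {f : X → X} (hf : Continuous f) {o : ℕ → X}
    (ho : ∀ n, f (o (n + 1)) = o n) {Y : Set X} (hY : IsClosed Y)
    (hδ : 0 < banachDensity (o ⁻¹' Y)) :
    ∃ Z ⊆ Y, 0 < banachDensity (o ⁻¹' Z) ∧
      ∃ d, 0 < d ∧ ∀ m, m + d ∈ o ⁻¹' Z → m ∈ o ⁻¹' Z := by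
  obtain ⟨Z, ⟨hZY, hZδ⟩, hmin⟩ := wellFounded_lt.has_min
    {Z : TopologicalSpace.Closeds X | (Z : Set X) ⊆ Y ∧ 0 < banachDensity (o ⁻¹' Z)}
    ⟨⟨Y, hY⟩, subset_rfl, hδ⟩
  obtain ⟨d, hd, hdδ⟩ := exists_pos_banachDensity_add_mem hZδ
  let Z' : TopologicalSpace.Closeds X :=
    ⟨Z ∩ f^[d] ⁻¹' Z, Z.isClosed.inter (Z.isClosed.preimage (hf.iterate d))⟩
  have hZ'δ : 0 < banachDensity (o ⁻¹' Z') := hdδ.trans_le <|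
    banachDensity_le_of_add_mem fun t ⟨ht, htd⟩ =>
      ⟨htd, by rwa [mem_preimage, iterate_apply_add_of_backward_orbit ho]⟩
  have hZ' : Z' = Z := eq_of_le_of_not_lt inter_subset_left
    (hmin Z' ⟨inter_subset_left.trans hZY, hZ'δ⟩)
  refine ⟨Z, hZY, hZδ, d, hd, fun m hm => ?_⟩
  rw [← hZ'] at hm
  simpa only [mem_preimage, iterate_apply_add_of_backward_orbit ho] using hm.2

theorem stmt_10_general {X : Type*} [TopologicalSpace X] [TopologicalSpace.NoetherianSpace X]
    (f : X → X) (hf : Continuous f) (o : ℕ → X)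
    (ho : ∀ n : ℕ, f (o (n + 1)) = o n)
    (Y : Set X) (hY : IsClosed Y)
    (hδ : 0 < banachDensity {n : ℕ | o n ∈ Y}) :
    ∃ a d : ℕ, 0 < d ∧
      {m : ℕ | ∃ n : ℕ, m = a + n * d} ⊆ {n : ℕ | o n ∈ Y} := by
  obtain ⟨Z, hZY, hZδ, d, hd, hsub⟩ :=
    exists_subset_pos_banachDensity_of_add_mem_imp_mem hf ho hY hδ
  obtain ⟨a, ha⟩ := exists_forall_add_mul_mem (Set.infinite_of_banachDensity_pos hZδ) hd hsub
  exact ⟨a, d, hd, fun _ ⟨n, hn⟩ => hZY (hn ▸ ha n)⟩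

theorem stmt_10 {X : Type*} [TopologicalSpace X] [TopologicalSpace.NoetherianSpace X]
    (f : X → X) (hf : Continuous f) (x : X) (o : ℕ → X)
    (ho0 : o 0 = x) (ho : ∀ n : ℕ, f (o (n + 1)) = o n)
    (Y : Set X) (hY : IsClosed Y)
    (hδ : 0 < banachDensity {n : ℕ | o n ∈ Y}) :
    ∃ a d : ℕ, 0 < d ∧
      {m : ℕ | ∃ n : ℕ, m = a + n * d} ⊆ {n : ℕ | o n ∈ Y} :=
  stmt_10_general f hf o ho Y hY hδ
end
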